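/- arXiv:1212.3022 — 3 statements merged into one kernel-verified Lean document; each statement's English description precedes it below -/
import Mathlib

section
/- The torsion submodule of an extension of scalars commutes with the extension: for H_1 a finitely generated free abelian group, H = H_1 ⊕ H_2 with H_2 free abelian, and M a finitely generated Z[H_1]-module, one has tor_{Z[H]}(M ⊗_{Z[H_1]} Z[H]) = (tor_{Z[H_1]} M) ⊗_{Z[H_1]} Z[H]. -/
/-!
STATEMENT 4: The torsion submodule of an extension of scalars commutes with the
extension: for `H₁` a finitely generated free abelian group, `H = H₁ ⊕ H₂` with
`H₂` free abelian, and `M` a finitely generated `ℤ[H₁]`-module, one has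
`tor_{ℤ[H]}(M ⊗_{ℤ[H₁]} ℤ[H]) = (tor_{ℤ[H₁]} M) ⊗_{ℤ[H₁]} ℤ[H]`.

We realize `H₁ = ℤ^{n₁}`, `H₂ = ℤ^{n₂}` and `H = H₁ × H₂`; the inclusion
`ℤ[H₁] ⊆ ℤ[H]` is induced by `h ↦ (h, 0)`, making `ℤ[H]` a `ℤ[H₁]`-algebra.
The right-hand side is interpreted, as usual, as the image of
`(tor M) ⊗ ℤ[H]` inside `M ⊗ ℤ[H]`, i.e. the base change
`(Submodule.torsion _ M).baseChange`.
-/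

open TensorProduct

noncomputable section

variable (n₁ n₂ : ℕ)

/-- `ℤ[H₁]` where `H₁ = ℤ^{n₁}`. -/
abbrev R1 : Type := AddMonoidAlgebra ℤ (Fin n₁ → ℤ)

/-- `ℤ[H]` where `H = H₁ ⊕ H₂ = ℤ^{n₁} × ℤ^{n₂}`. -/
abbrev RH : Type := AddMonoidAlgebra ℤ ((Fin n₁ → ℤ) × (Fin n₂ → ℤ))

/-- `ℤ[H₁]` is a subring of `ℤ[H]` via `h ↦ (h, 0)`. -/
instance : Algebra (R1 n₁) (RH n₁ n₂) :=
  (AddMonoidAlgebra.mapDomainRingHom ℤ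
    (AddMonoidHom.inl (Fin n₁ → ℤ) (Fin n₂ → ℤ))).toAlgebra

/-!
`ℤ[H] ≅ ℤ[H₁][H₂]` is free, hence flat, over `ℤ[H₁]`, and the statement holds for any
flat algebra `A` over a domain `R`. Regular elements of `R` stay regular in `A`, which
gives `⊇`. For `⊆`, right exactness of `A ⊗ -` identifies `(tor M).baseChange A` with the
kernel of `A ⊗ M → A ⊗ (M ⧸ tor M)`, so it suffices that `A ⊗ N` is `A`-torsion-free for
the finitely generated torsion-free module `N = M ⧸ tor M`. Multiplication by a common
denominator embeds `N` into the free span of a maximal independent set of generators, and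
flatness carries this embedding over to `A ⊗ N`.
-/

open Module Submodule
open scoped nonZeroDivisors

section TorsionBaseChange

variable {R : Type*} [CommRing R] (A : Type*) [CommRing A] [Algebra R A]
  (M : Type*) [AddCommGroup M] [Module R M]

theorem Module.Finite.exists_free_submodule_smul_mem [IsDomain R] [Module.Finite R M] :
    ∃ (N : Submodule R M) (c : R), c ≠ 0 ∧ Module.Free R N ∧ ∀ x : M, c • x ∈ N := by
  classical
  obtain ⟨n, s, hs⟩ := Module.Finite.exists_fin (R := R) (M := M)
  obtain ⟨I, hI, hmax⟩ := exists_maximal_linearIndepOn R s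
  set N := span R (s '' I)
  have hN : ∀ i, ∃ a : R, a ≠ 0 ∧ a • s i ∈ N := fun i => by
    by_cases hi : i ∈ I
    · exact ⟨1, one_ne_zero, by simpa using subset_span (Set.mem_image_of_mem s hi)⟩
    · exact hmax i hi
  choose a ha₀ haN using hN
  refine ⟨N, ∏ i, a i, Finset.prod_ne_zero_iff.mpr fun i _ => ha₀ i, ?_, fun x => ?_⟩
  · rw [show N = span R (Set.range fun i : I => s i) from
      congrArg (span R) (Set.image_eq_range s I)]
    exact Free.of_basis (Basis.span hI)
  · have hle : span R (Set.range s) ≤ N.comap (LinearMap.lsmul R M (∏ i, a i)) := by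
      rw [span_le]
      rintro _ ⟨i, rfl⟩
      obtain ⟨k, hk⟩ := Finset.dvd_prod_of_mem a (Finset.mem_univ i)
      show (∏ i, a i) • s i ∈ N
      rw [hk, mul_comm, mul_smul]
      exact N.smul_mem k (haN i)
    exact hle (hs ▸ mem_top)

theorem Module.IsTorsionFree.baseChange [IsDomain R] [Module.Flat R A] [Module.Finite R M]
    [IsTorsionFree R M] : IsTorsionFree A (A ⊗[R] M) := by
  obtain ⟨N, c, hc, _, hcN⟩ := Module.Finite.exists_free_submodule_smul_mem M (R := R)
  let f : M →ₗ[R] N := (LinearMap.lsmul R M c).codRestrict N hcN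
  have hf : Function.Injective f := fun x y hxy =>
    smul_right_injective M hc (congrArg Subtype.val hxy)
  exact (Flat.lTensor_preserves_injective_linearMap f hf).moduleIsTorsionFree
    (f.baseChange A) (map_smul _)

theorem Module.Flat.algebraMap_mem_nonZeroDivisors [Module.Flat R A] {r : R} (hr : r ∈ R⁰) :
    algebraMap R A r ∈ A⁰ :=
  mem_nonZeroDivisors_iff_right.mpr fun x hx =>
    Flat.isSMulRegular_of_nonZeroDivisors hr (by simpa [Algebra.smul_def, mul_comm] using hx)

theorem Submodule.baseChange_torsion_le [Module.Flat R A] :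
    (torsion R M).baseChange A ≤ torsion A (A ⊗[R] M) := by
  rw [baseChange_eq_span, span_le]
  rintro _ ⟨m, ⟨r, hrm⟩, rfl⟩
  refine ⟨⟨_, Flat.algebraMap_mem_nonZeroDivisors A r.2⟩, ?_⟩
  show algebraMap R A r • ((1 : A) ⊗ₜ[R] m) = 0
  rw [algebraMap_smul, ← tmul_smul, ← Submonoid.smul_def, hrm, tmul_zero]

theorem Submodule.torsion_le_baseChange_torsion [IsDomain R] [Module.Flat R A]
    [Module.Finite R M] : torsion A (A ⊗[R] M) ≤ (torsion R M).baseChange A := by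
  have := Module.IsTorsionFree.baseChange A (M ⧸ torsion R M) (R := R)
  rintro x ⟨a, hax⟩
  have hx : (torsion R M).mkQ.baseChange A x = 0 :=
    (isRegular_iff_mem_nonZeroDivisors.mpr a.2).smul_eq_zero_iff_right.mp
      (by rw [← map_smul, ← Submonoid.smul_def, hax, map_zero])
  exact (lTensor_exact A (LinearMap.exact_subtype_mkQ _) (mkQ_surjective _) x).mp hx

theorem Submodule.torsion_baseChange_of_flat [IsDomain R] [Module.Flat R A] [Module.Finite R M] :
    torsion A (A ⊗[R] M) = (torsion R M).baseChange A :=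
  (torsion_le_baseChange_torsion A M).antisymm (baseChange_torsion_le A M)

end TorsionBaseChange

def RH.curryAlgEquiv : RH n₁ n₂ ≃ₐ[R1 n₁] AddMonoidAlgebra (R1 n₁) (Fin n₂ → ℤ) :=
  AlgEquiv.ofRingEquiv
    (f := (AddMonoidAlgebra.domCongr ℤ ℤ AddEquiv.prodComm).toRingEquiv.trans
      AddMonoidAlgebra.curryRingEquiv) fun x => by
    induction x using AddMonoidAlgebra.induction_linear with
    | zero => simp
    | add x y hx hy => simp only [map_add, hx, hy]
    | single a r => simp [algebraMap, Algebra.algebraMap]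

instance : Module.Free (R1 n₁) (RH n₁ n₂) :=
  .of_equiv (RH.curryAlgEquiv n₁ n₂).symm.toLinearEquiv

theorem torsion_baseChange
    (M : Type*) [AddCommGroup M] [Module (R1 n₁) M] [Module.Finite (R1 n₁) M] :
    Submodule.torsion (RH n₁ n₂) ((RH n₁ n₂) ⊗[R1 n₁] M) =
      (Submodule.torsion (R1 n₁) M).baseChange (RH n₁ n₂) :=
  Submodule.torsion_baseChange_of_flat (RH n₁ n₂) M

end
end

section
/- Let Δ be a nonconstant Laurent polynomial in n ≥ 2 variables over Z. The Newton polytope of Δ is a line segment if and only if the zero locus V(Δ) ⊂ (C*)^n is a finite union of parallel codimension-one translated subtori of (C*)^n. -/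
/-!
STATEMENT 6: Let `Δ` be a nonconstant Laurent polynomial in `n ≥ 2` variables
over `ℤ`.  The Newton polytope of `Δ` is a line segment if and only if the
zero locus `V(Δ) ⊂ (ℂ*)^n` is a finite (nonempty) union of parallel
codimension-one translated subtori of `(ℂ*)^n`.

A codimension-one subtorus is `{ρ : ρ^h = 1}` for a primitive `h ∈ ℤ^n`,
`h ≠ 0`; its cosets are the sets `{ρ : ρ^h = z}` with `z ∈ ℂ*`; cosets of one
and the same such subtorus are parallel.  The Newton polytope (the convex hull
of the exponents of `Δ`) is a line segment iff the exponents are collinear and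
at least two of them occur.
-/

/-- Laurent polynomials `ℤ[t₁^{±1},…,t_n^{±1}] = ℤ[ℤ^n]`. -/
abbrev LaurentRing (n : ℕ) : Type := AddMonoidAlgebra ℤ (Fin n → ℤ)

/-- Evaluation of a Laurent polynomial at a point of the torus `(ℂ*)^n`. -/
noncomputable def evalT {n : ℕ} (p : LaurentRing n) (ρ : Fin n → ℂˣ) : ℂ :=
  p.coeff.sum fun h a => (a : ℂ) * ∏ i, ((ρ i : ℂ) ^ (h i))

/-- The zero locus of `Δ` in the torus `(ℂ*)^n`. -/
def V {n : ℕ} (Δ : LaurentRing n) : Set (Fin n → ℂˣ) := {ρ | evalT Δ ρ = 0}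

/-- The monomial character `ρ ↦ ρ^h` of the torus. -/
noncomputable def torPow {n : ℕ} (ρ : Fin n → ℂˣ) (h : Fin n → ℤ) : ℂˣ :=
  ∏ i, (ρ i) ^ (h i)

/-- A primitive vector of `ℤ^n` (its coordinates have gcd one). -/
def IsPrimitiveVec {n : ℕ} (h : Fin n → ℤ) : Prop :=
  ∀ d : ℤ, (∀ i, d ∣ h i) → IsUnit d

/-- The Newton polytope of `Δ` is a line segment: the exponents of `Δ` are
collinear and at least two exponents occur. -/
def NewtonSegment {n : ℕ} (Δ : LaurentRing n) : Prop :=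
  (∃ (g v : Fin n → ℤ), v ≠ 0 ∧
    ∀ g' ∈ Δ.coeff.support, ∃ k : ℤ, g' = g + k • v) ∧ 2 ≤ Δ.coeff.support.card

/-!
Take `c` with `c ⬝ᵥ h = 1` and group the exponents of `Δ` by their projection `u` to `ker c`
along `h`: then `Δ(ρ) = ∑ᵤ ρ^u Qᵤ(ρ^h)` with one-variable Laurent polynomials `Qᵤ`.
If the Newton polytope is a segment in direction `h` there is a single `u`, and `V(Δ)` is the
preimage under `ρ ↦ ρ^h` of the zero set of `Qᵤ`, which is finite and, as `Qᵤ` has two terms,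
nonempty. Conversely, let `V(Δ)` be such a preimage and restrict `Δ` to an orbit `σ ↦ ρ σ^ψ`
of a one-parameter subgroup with `ψ ⬝ᵥ h = 0` that separates the `u`'s. Along it `ρ^h` is
constant, so the restriction, a Laurent polynomial in `σ` with coefficients `ρ^u Qᵤ(ρ^h)`,
vanishes identically or nowhere; either way it has at most one nonzero coefficient, which fails
at a point where two distinct `Qᵤ` are nonzero.
-/

open Polynomial Finset

section LaurentSum

variable {α : Type*}

noncomputable def laurentSum (s : Finset α) (a : α → ℂ) (e : α → ℤ) (σ : ℂ) : ℂ :=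
  ∑ x ∈ s, a x * σ ^ e x

/-- `σ ^ M * laurentSum s a e σ` as a polynomial in `σ`, once `M` clears every negative
exponent. -/
noncomputable def clearedPoly (s : Finset α) (a : α → ℂ) (e : α → ℤ) (M : ℤ) : ℂ[X] :=
  ∑ x ∈ s, C (a x) * X ^ (e x + M).toNat

variable {s : Finset α} {a : α → ℂ} {e : α → ℤ} {M : ℤ}

lemma eval_clearedPoly (hM : ∀ x ∈ s, 0 ≤ e x + M) {σ : ℂ} (hσ : σ ≠ 0) :
    (clearedPoly s a e M).eval σ = σ ^ M * laurentSum s a e σ := by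
  rw [clearedPoly, laurentSum, eval_finsetSum, mul_sum]
  refine sum_congr rfl fun x hx => ?_
  rw [eval_mul, eval_C, eval_pow, eval_X, ← zpow_natCast, Int.toNat_of_nonneg (hM x hx),
    zpow_add₀ hσ]
  ring

lemma coeff_clearedPoly (hM : ∀ x ∈ s, 0 ≤ e x + M) (he : Set.InjOn e s) {x : α}
    (hx : x ∈ s) : (clearedPoly s a e M).coeff (e x + M).toNat = a x := by
  rw [clearedPoly, finsetSum_coeff, sum_eq_single_of_mem x hx]
  · simp
  · intro y hy hyx
    have hexp : (e x + M).toNat ≠ (e y + M).toNat := by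
      have := Int.toNat_of_nonneg (hM x hx)
      have := Int.toNat_of_nonneg (hM y hy)
      have := mt (he hy hx) hyx
      omega
    simp [coeff_X_pow, hexp]

lemma exists_clearing_exponent (hs : s.Nonempty) (e : α → ℤ) :
    ∃ x₀ ∈ s, ∀ x ∈ s, 0 ≤ e x + -e x₀ := by
  obtain ⟨x₀, hx₀, hmin⟩ := s.exists_min_image e hs
  exact ⟨x₀, hx₀, fun x hx => by linarith [hmin x hx]⟩

lemma finite_setOf_laurentSum_eq_zero (he : Set.InjOn e s) {x : α} (hx : x ∈ s)
    (ha : a x ≠ 0) : {σ : ℂˣ | laurentSum s a e σ = 0}.Finite := by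
  obtain ⟨x₀, -, hM⟩ := exists_clearing_exponent ⟨x, hx⟩ e
  have hP : clearedPoly s a e (-e x₀) ≠ 0 := fun h0 => by
    simpa [h0, eq_comm, ha] using coeff_clearedPoly (a := a) hM he hx
  refine ((finite_setOfPred_isRoot hP).preimage Units.val_injective.injOn).subset ?_
  intro σ hσ
  simp_all [eval_clearedPoly hM σ.ne_zero]

/-- Clearing denominators by the lowest exponent gives a nonconstant polynomial with nonzero
constant term. -/
lemma exists_laurentSum_eq_zero (he : Set.InjOn e s) {x y : α} (hx : x ∈ s) (hy : y ∈ s)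
    (hxy : x ≠ y) (hax : a x ≠ 0) (hay : a y ≠ 0) : ∃ σ : ℂˣ, laurentSum s a e σ = 0 := by
  classical
  set t := s.filter (a · ≠ 0)
  have hts : ∀ σ, laurentSum t a e σ = laurentSum s a e σ := fun σ =>
    sum_filter_of_ne fun z _ hz hza => hz (by simp [hza])
  have het : Set.InjOn e t := he.mono (by simp [t, Set.subset_def]; tauto)
  have hxt : x ∈ t := by simp [t, hx, hax]
  have hyt : y ∈ t := by simp [t, hy, hay]
  obtain ⟨x₀, hx₀, hM⟩ := exists_clearing_exponent ⟨x, hxt⟩ e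
  obtain ⟨x₁, hx₁, hx₁x₀⟩ : ∃ x₁ ∈ t, x₁ ≠ x₀ := by
    by_cases h : x = x₀
    · exact ⟨y, hyt, h ▸ hxy.symm⟩
    · exact ⟨x, hxt, h⟩
  set P := clearedPoly t a e (-e x₀)
  have hP0 : P.coeff 0 ≠ 0 := by
    have h := coeff_clearedPoly (a := a) hM het hx₀
    rw [add_neg_cancel, Int.toNat_zero] at h
    exact h ▸ (mem_filter.mp hx₀).2
  have hdeg : 0 < P.natDegree := by
    refine lt_of_lt_of_le ?_ (le_natDegree_of_ne_zero (n := (e x₁ + -e x₀).toNat) ?_)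
    · have := hM x₁ hx₁
      have := mt (het hx₁ hx₀) hx₁x₀
      omega
    · rw [coeff_clearedPoly hM het hx₁]
      exact (mem_filter.mp hx₁).2
  obtain ⟨z, hz⟩ := Complex.exists_root (natDegree_pos_iff_degree_pos.mp hdeg)
  have hz0 : z ≠ 0 := by
    rintro rfl
    exact hP0 (by rwa [IsRoot, ← coeff_zero_eq_eval_zero] at hz)
  refine ⟨Units.mk0 z hz0, ?_⟩
  rw [IsRoot, eval_clearedPoly hM hz0, hts] at hz
  simpa [zpow_ne_zero _ hz0] using hz

end LaurentSum

instance : Infinite ℂˣ :=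
  Infinite.of_injective (fun k : ℕ => Units.mk0 ((k : ℂ) + 1) (Nat.cast_add_one_ne_zero k))
    fun k l hkl => by simpa using congrArg Units.val hkl

lemma prod_zpow_eq_zpow_sum {ι G : Type*} [CommGroup G] (s : Finset ι) (f : ι → ℤ) (σ : G) :
    ∏ i ∈ s, σ ^ f i = σ ^ ∑ i ∈ s, f i := by
  induction s using Finset.cons_induction with
  | empty => simp
  | cons i s hi ih => rw [prod_cons, sum_cons, ih, zpow_add]

section Torus

variable {n : ℕ}

lemma torPow_add (ρ : Fin n → ℂˣ) (g g' : Fin n → ℤ) :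
    torPow ρ (g + g') = torPow ρ g * torPow ρ g' := by
  simp only [torPow, Pi.add_apply, zpow_add, prod_mul_distrib]

lemma torPow_zsmul (ρ : Fin n → ℂˣ) (k : ℤ) (g : Fin n → ℤ) :
    torPow ρ (k • g) = torPow ρ g ^ k := by
  simp only [torPow, ← prod_zpow, Pi.smul_apply, smul_eq_mul, mul_comm k, zpow_mul]

lemma torPow_mul (ρ τ : Fin n → ℂˣ) (g : Fin n → ℤ) :
    torPow (ρ * τ) g = torPow ρ g * torPow τ g := by
  simp only [torPow, Pi.mul_apply, mul_zpow, prod_mul_distrib]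

lemma surjective_torPow {h : Fin n → ℤ} (hh : h ≠ 0) : Function.Surjective (torPow · h) := by
  classical
  intro s
  obtain ⟨i, hi⟩ := Function.ne_iff.mp hh
  obtain ⟨w, hw⟩ : ∃ w : ℂ, w ^ h i = s := by
    refine ⟨Complex.exp (Complex.log s / h i), ?_⟩
    rw [← Complex.exp_int_mul, mul_div_cancel₀ _ (by exact_mod_cast hi),
      Complex.exp_log s.ne_zero]
  have hw0 : w ≠ 0 := by
    rintro rfl
    exact s.ne_zero (by rw [← hw, zero_zpow _ hi])
  refine ⟨Pi.mulSingle i (Units.mk0 w hw0), ?_⟩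
  change torPow _ h = s
  rw [torPow, prod_eq_single i (fun j _ hj => by simp [hj]) (by simp)]
  ext
  simpa using hw

noncomputable def oneParam (ψ : Fin n → ℤ) (σ : ℂˣ) : Fin n → ℂˣ := fun i => σ ^ ψ i

lemma torPow_oneParam (ψ : Fin n → ℤ) (σ : ℂˣ) (g : Fin n → ℤ) :
    torPow (oneParam ψ σ) g = σ ^ (ψ ⬝ᵥ g) := by
  simp only [torPow, oneParam, dotProduct, ← zpow_mul, prod_zpow_eq_zpow_sum]

lemma evalT_eq_sum_torPow (Δ : LaurentRing n) (ρ : Fin n → ℂˣ) :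
    evalT Δ ρ = ∑ g ∈ Δ.coeff.support, (Δ.coeff g : ℂ) * (torPow ρ g : ℂ) := by
  simp [evalT, torPow, Finsupp.sum]

end Torus

section Lattice

variable {n : ℕ}

lemma exists_dotProduct_ne_zero (S : Finset (Fin n → ℤ)) (hS : ∀ d ∈ S, d ≠ 0) :
    ∃ w : Fin n → ℤ, ∀ d ∈ S, w ⬝ᵥ d ≠ 0 := by
  classical
  induction S using Finset.induction_on with
  | empty => exact ⟨0, by simp⟩
  | insert d S hdS ih =>
    obtain ⟨w, hw⟩ := ih fun d' hd' => hS d' (mem_insert_of_mem hd')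
    obtain ⟨i, hi⟩ := Function.ne_iff.mp (hS d (mem_insert_self d S))
    -- for each `d'` with `d' i ≠ 0` at most one `k` makes `(w + k • eᵢ) ⬝ᵥ d'` vanish
    obtain ⟨k, hk⟩ := Infinite.exists_notMem_finset
      ((insert d S).image fun d' => -(w ⬝ᵥ d') / d' i)
    refine ⟨w + k • Pi.single i 1, fun d' hd' hzero => ?_⟩
    rw [add_dotProduct, smul_dotProduct, single_dotProduct, one_mul, smul_eq_mul] at hzero
    by_cases hd'i : d' i = 0
    · have hd'S : d' ∈ S := (mem_insert.mp hd').resolve_left fun h => hi (h ▸ hd'i)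
      exact hw d' hd'S (by simpa [hd'i] using hzero)
    · refine hk (mem_image.mpr ⟨d', hd', ?_⟩)
      rw [show -(w ⬝ᵥ d') = k * d' i by linarith, Int.mul_ediv_cancel _ hd'i]

open scoped Pointwise in
lemma exists_injOn_dotProduct (C : Finset (Fin n → ℤ)) :
    ∃ w : Fin n → ℤ, Set.InjOn (w ⬝ᵥ ·) C := by
  classical
  obtain ⟨w, hw⟩ := exists_dotProduct_ne_zero ((C - C).erase 0) fun d hd => (mem_erase.mp hd).1
  refine ⟨w, fun u hu u' hu' huu' => by_contra fun hne => ?_⟩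
  refine hw (u - u') (mem_erase.mpr ⟨sub_ne_zero.mpr hne, sub_mem_sub hu hu'⟩) ?_
  rw [dotProduct_sub, sub_eq_zero]
  exact huu'

lemma IsPrimitiveVec.exists_dotProduct_eq_one {h : Fin n → ℤ} (hh : IsPrimitiveVec h) :
    ∃ c : Fin n → ℤ, c ⬝ᵥ h = 1 := by
  set I : Ideal ℤ := Ideal.span (Set.range h)
  have hI : I = ⊤ := by
    refine Ideal.eq_top_of_isUnit_mem I (Submodule.IsPrincipal.generator_mem I) (hh _ fun i => ?_)
    exact (Submodule.IsPrincipal.mem_iff_generator_dvd I).mp (Ideal.subset_span ⟨i, rfl⟩)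
  obtain ⟨c, hc⟩ := (Submodule.mem_span_range_iff_exists_fun ℤ).mp (hI ▸ Submodule.mem_top :
    (1 : ℤ) ∈ I)
  exact ⟨c, by simpa [dotProduct] using hc⟩

lemma exists_isPrimitiveVec_zsmul_eq {v : Fin n → ℤ} (hv : v ≠ 0) :
    ∃ h : Fin n → ℤ, IsPrimitiveVec h ∧ ∃ d : ℤ, v = d • h := by
  set d := univ.gcd v
  have hdv : ∀ i, d ∣ v i := fun i => gcd_dvd (mem_univ i)
  have hd : d ≠ 0 := fun hd => hv (funext fun i => by simpa [hd] using hdv i)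
  have hv_eq : v = d • fun i => v i / d :=
    funext fun i => (Int.mul_ediv_cancel' (hdv i)).symm
  refine ⟨fun i => v i / d, fun e he => ?_, d, hv_eq⟩
  have hed : e * d ∣ d := dvd_gcd fun i _ => by
    rw [hv_eq, Pi.smul_apply, smul_eq_mul, mul_comm e]
    exact mul_dvd_mul_left d (he i)
  obtain ⟨u, hu⟩ := hed
  exact IsUnit.of_mul_eq_one u (mul_left_cancel₀ hd (by linear_combination hu.symm))

end Lattice

section Fibers

variable {n : ℕ} (c h : Fin n → ℤ)

/-- The projection of `ℤ^n` onto `ker (c ⬝ᵥ ·)` along `h`, when `c ⬝ᵥ h = 1`. -/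
def projKer (g : Fin n → ℤ) : Fin n → ℤ := g - (c ⬝ᵥ g) • h

lemma projKer_add_smul (g : Fin n → ℤ) : projKer c h g + (c ⬝ᵥ g) • h = g :=
  sub_add_cancel _ _

variable {c h}

lemma dotProduct_projKer (hc : c ⬝ᵥ h = 1) (g : Fin n → ℤ) : c ⬝ᵥ projKer c h g = 0 := by
  rw [projKer, dotProduct_sub, dotProduct_smul, hc, smul_eq_mul, mul_one, sub_self]

lemma projKer_add_zsmul (hc : c ⬝ᵥ h = 1) (g : Fin n → ℤ) (k : ℤ) :
    projKer c h (g + k • h) = projKer c h g := by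
  simp only [projKer, dotProduct_add, dotProduct_smul, hc, smul_eq_mul, mul_one, add_smul]
  abel

variable (c h)

/-- The terms of `Δ` with exponents over `u`, divided by `t ^ u`, as a Laurent polynomial in
`t ^ h`. -/
noncomputable def fiberSum (Δ : LaurentRing n) (u : Fin n → ℤ) : ℂ → ℂ :=
  laurentSum (Δ.coeff.support.filter (projKer c h · = u)) (fun g => (Δ.coeff g : ℂ)) (c ⬝ᵥ ·)

lemma evalT_eq_sum_fiberSum (Δ : LaurentRing n) (ρ : Fin n → ℂˣ) :
    evalT Δ ρ = ∑ u ∈ Δ.coeff.support.image (projKer c h),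
      (torPow ρ u : ℂ) * fiberSum c h Δ u (torPow ρ h) := by
  classical
  rw [evalT_eq_sum_torPow, ← sum_fiberwise_of_maps_to fun g => mem_image_of_mem (projKer c h)]
  refine sum_congr rfl fun u _ => ?_
  rw [fiberSum, laurentSum, mul_sum]
  refine sum_congr rfl fun g hg => ?_
  have hsplit : torPow ρ g = torPow ρ u * torPow ρ h ^ (c ⬝ᵥ g) := by
    rw [← (mem_filter.mp hg).2, ← torPow_zsmul, ← torPow_add, projKer_add_smul]
  rw [hsplit, Units.val_mul, Units.val_zpow_eq_zpow_val]
  ring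

lemma injOn_dotProduct_fiber (Δ : LaurentRing n) (u : Fin n → ℤ) :
    Set.InjOn (c ⬝ᵥ ·) (Δ.coeff.support.filter (projKer c h · = u)) := by
  intro a ha b hb hab
  rw [← projKer_add_smul c h a, ← projKer_add_smul c h b, (mem_filter.mp ha).2,
    (mem_filter.mp hb).2]
  rw [show c ⬝ᵥ a = c ⬝ᵥ b from hab]

lemma finite_setOf_fiberSum_eq_zero (Δ : LaurentRing n) {g : Fin n → ℤ}
    (hg : g ∈ Δ.coeff.support) : {s : ℂˣ | fiberSum c h Δ (projKer c h g) s = 0}.Finite :=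
  finite_setOf_laurentSum_eq_zero (injOn_dotProduct_fiber c h Δ _) (mem_filter.mpr ⟨hg, rfl⟩)
    (by exact_mod_cast Finsupp.mem_support_iff.mp hg)

end Fibers

section Segment

variable {n : ℕ} {c h : Fin n → ℤ} {Δ : LaurentRing n}

lemma iUnion_torPow_eq_preimage (h : Fin n → ℤ) (Z : Finset ℂˣ) :
    ⋃ z ∈ Z, {ρ : Fin n → ℂˣ | torPow ρ h = z} = (torPow · h) ⁻¹' Z := by
  ext ρ
  simp

lemma NewtonSegment.exists_V_eq_iUnion (hΔ : NewtonSegment Δ) :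
    ∃ h : Fin n → ℤ, h ≠ 0 ∧ IsPrimitiveVec h ∧
      ∃ Z : Finset ℂˣ, Z.Nonempty ∧ V Δ = ⋃ z ∈ Z, {ρ : Fin n → ℂˣ | torPow ρ h = z} := by
  classical
  obtain ⟨⟨g, v, hv, hline⟩, hcard⟩ := hΔ
  obtain ⟨h, hprim, d, rfl⟩ := exists_isPrimitiveVec_zsmul_eq hv
  have hh : h ≠ 0 := by rintro rfl; simp at hv
  obtain ⟨c, hc⟩ := hprim.exists_dotProduct_eq_one
  have hfiber : ∀ g' ∈ Δ.coeff.support, projKer c h g' = projKer c h g := fun g' hg' => by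
    obtain ⟨k, rfl⟩ := hline g' hg'
    rw [smul_smul, projKer_add_zsmul hc]
  obtain ⟨x, hx, y, hy, hxy⟩ := one_lt_card.mp hcard
  have himage : Δ.coeff.support.image (projKer c h) = {projKer c h g} :=
    eq_singleton_iff_unique_mem.mpr ⟨mem_image.mpr ⟨x, hx, hfiber x hx⟩,
      fun u hu => by obtain ⟨g', hg', rfl⟩ := mem_image.mp hu; exact hfiber g' hg'⟩
  set Q := fiberSum c h Δ (projKer c h g)
  have hV : V Δ = (torPow · h) ⁻¹' {s | Q s = 0} := by
    ext ρ
    simp [V, evalT_eq_sum_fiberSum c h, himage, Q]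
  have hfin : {s : ℂˣ | Q s = 0}.Finite := by
    simpa only [Q, hfiber x hx] using finite_setOf_fiberSum_eq_zero c h Δ hx
  obtain ⟨s, hs⟩ : ∃ s : ℂˣ, Q s = 0 := by
    have hcoeff : ∀ g' ∈ Δ.coeff.support, (Δ.coeff g' : ℂ) ≠ 0 := fun g' hg' => by
      exact_mod_cast Finsupp.mem_support_iff.mp hg'
    exact exists_laurentSum_eq_zero (injOn_dotProduct_fiber c h Δ _)
      (mem_filter.mpr ⟨hx, hfiber x hx⟩) (mem_filter.mpr ⟨hy, hfiber y hy⟩) hxy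
      (hcoeff x hx) (hcoeff y hy)
  refine ⟨h, hh, hprim, hfin.toFinset, ⟨s, by simpa using hs⟩, ?_⟩
  rw [iUnion_torPow_eq_preimage, hV, hfin.coe_toFinset]

lemma torPow_mul_oneParam (ρ : Fin n → ℂˣ) (ψ : Fin n → ℤ) (σ : ℂˣ) (g : Fin n → ℤ) :
    torPow (ρ * oneParam ψ σ) g = torPow ρ g * σ ^ (ψ ⬝ᵥ g) := by
  rw [torPow_mul, torPow_oneParam]

lemma evalT_mul_oneParam (Δ : LaurentRing n) {ψ : Fin n → ℤ} (hψ : ψ ⬝ᵥ h = 0)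
    (ρ : Fin n → ℂˣ) (σ : ℂˣ) :
    evalT Δ (ρ * oneParam ψ σ) = laurentSum (Δ.coeff.support.image (projKer c h))
      (fun u => torPow ρ u * fiberSum c h Δ u (torPow ρ h)) (ψ ⬝ᵥ ·) σ := by
  rw [evalT_eq_sum_fiberSum c h, laurentSum]
  refine sum_congr rfl fun u _ => ?_
  simp only [torPow_mul_oneParam, hψ, zpow_zero, mul_one, Units.val_mul, Units.val_zpow_eq_zpow_val]
  ring

lemma exists_dotProduct_eq_zero_injOn (hc : c ⬝ᵥ h = 1) {C : Finset (Fin n → ℤ)}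
    (hC : ∀ u ∈ C, c ⬝ᵥ u = 0) : ∃ ψ : Fin n → ℤ, ψ ⬝ᵥ h = 0 ∧ Set.InjOn (ψ ⬝ᵥ ·) C := by
  obtain ⟨w, hw⟩ := exists_injOn_dotProduct C
  have hψ : ∀ u, (w - (w ⬝ᵥ h) • c) ⬝ᵥ u = w ⬝ᵥ u - (w ⬝ᵥ h) * c ⬝ᵥ u := fun u => by
    rw [sub_dotProduct, smul_dotProduct, smul_eq_mul]
  refine ⟨w - (w ⬝ᵥ h) • c, by rw [hψ, hc, mul_one, sub_self], fun u hu u' hu' huu' => ?_⟩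
  simp only [hψ, hC u hu, hC u' hu', mul_zero, sub_zero] at huu'
  exact hw hu hu' huu'

lemma projKer_eq_of_V_eq_preimage (hc : c ⬝ᵥ h = 1) {Z : Set ℂˣ}
    (hV : V Δ = (torPow · h) ⁻¹' Z) {g₀ g₁ : Fin n → ℤ} (hg₀ : g₀ ∈ Δ.coeff.support)
    (hg₁ : g₁ ∈ Δ.coeff.support) : projKer c h g₀ = projKer c h g₁ := by
  classical
  by_contra hne
  have hh : h ≠ 0 := by rintro rfl; simp at hc
  obtain ⟨s, hs₀, hs₁⟩ : ∃ s : ℂˣ, fiberSum c h Δ (projKer c h g₀) s ≠ 0 ∧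
      fiberSum c h Δ (projKer c h g₁) s ≠ 0 := by
    obtain ⟨s, hs⟩ := ((finite_setOf_fiberSum_eq_zero c h Δ hg₀).union
      (finite_setOf_fiberSum_eq_zero c h Δ hg₁)).infinite_compl.nonempty
    exact ⟨s, by simpa [not_or] using hs⟩
  obtain ⟨ρ, rfl⟩ := surjective_torPow hh s
  set C := Δ.coeff.support.image (projKer c h)
  obtain ⟨ψ, hψh, hψ⟩ := exists_dotProduct_eq_zero_injOn hc (C := C)
    (by simp [C, dotProduct_projKer hc])
  set a : (Fin n → ℤ) → ℂ := fun u => torPow ρ u * fiberSum c h Δ u (torPow ρ h)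
  have hconst : ∀ σ : ℂˣ, laurentSum C a (ψ ⬝ᵥ ·) σ = 0 ↔ ρ ∈ V Δ := fun σ => by
    rw [← evalT_mul_oneParam Δ hψh]
    change ρ * oneParam ψ σ ∈ V Δ ↔ ρ ∈ V Δ
    simp [hV, torPow_mul_oneParam, hψh]
  have ha₀ : a (projKer c h g₀) ≠ 0 := mul_ne_zero (Units.ne_zero _) hs₀
  have ha₁ : a (projKer c h g₁) ≠ 0 := mul_ne_zero (Units.ne_zero _) hs₁
  have hC₀ := mem_image_of_mem (projKer c h) hg₀
  have hC₁ := mem_image_of_mem (projKer c h) hg₁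
  by_cases hρ : ρ ∈ V Δ
  · exact Set.infinite_univ
      ((finite_setOf_laurentSum_eq_zero hψ hC₀ ha₀).subset fun σ _ => (hconst σ).2 hρ)
  · obtain ⟨σ, hσ⟩ := exists_laurentSum_eq_zero hψ hC₀ hC₁ hne ha₀ ha₁
    exact hρ ((hconst σ).1 hσ)

lemma two_le_card_support_of_V_eq_preimage (hh : h ≠ 0) {Z : Set ℂˣ} (hZ : Z.Finite)
    (hZne : Z.Nonempty) (hV : V Δ = (torPow · h) ⁻¹' Z) : 2 ≤ #Δ.coeff.support := by
  have hpre := (surjective_torPow hh).preimage_injective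
  by_contra! hlt
  interval_cases hcard : #Δ.coeff.support
  · have hVuniv : V Δ = Set.univ := by
      ext ρ
      simp [V, evalT_eq_sum_torPow, card_eq_zero.mp hcard]
    have hZuniv : Z = Set.univ := hpre (by rw [← hV, hVuniv, Set.preimage_univ])
    exact Set.infinite_univ (hZuniv ▸ hZ)
  · obtain ⟨g, hg⟩ := card_eq_one.mp hcard
    have hg' : g ∈ Δ.coeff.support := hg ▸ mem_singleton_self g
    have hVempty : V Δ = ∅ := by
      ext ρ
      simpa [V, evalT_eq_sum_torPow, hg] using Finsupp.mem_support_iff.mp hg'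
    have hZempty : Z = ∅ := hpre (by rw [← hV, hVempty, Set.preimage_empty])
    exact hZne.ne_empty hZempty

lemma newtonSegment_of_V_eq_preimage (hh : h ≠ 0) (hprim : IsPrimitiveVec h) {Z : Set ℂˣ}
    (hZ : Z.Finite) (hZne : Z.Nonempty) (hV : V Δ = (torPow · h) ⁻¹' Z) : NewtonSegment Δ := by
  obtain ⟨c, hc⟩ := hprim.exists_dotProduct_eq_one
  have hcard := two_le_card_support_of_V_eq_preimage hh hZ hZne hV
  obtain ⟨g₀, hg₀⟩ := card_pos.mp (by omega : 0 < #Δ.coeff.support)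
  refine ⟨⟨projKer c h g₀, h, hh, fun g hg => ⟨c ⬝ᵥ g, ?_⟩⟩, hcard⟩
  rw [← projKer_eq_of_V_eq_preimage hc hV hg hg₀, projKer_add_smul]

end Segment

theorem newtonSegment_iff_union_parallel_subtori_general
    (n : ℕ) (Δ : LaurentRing n) :
    NewtonSegment Δ ↔
      ∃ h : Fin n → ℤ, h ≠ 0 ∧ IsPrimitiveVec h ∧
        ∃ Z : Finset ℂˣ, Z.Nonempty ∧
          V Δ = ⋃ z ∈ Z, {ρ : Fin n → ℂˣ | torPow ρ h = z} := by
  refine ⟨NewtonSegment.exists_V_eq_iUnion, ?_⟩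
  rintro ⟨h, hh, hprim, Z, hZne, hV⟩
  rw [iUnion_torPow_eq_preimage] at hV
  exact newtonSegment_of_V_eq_preimage hh hprim Z.finite_toSet hZne hV

theorem newtonSegment_iff_union_parallel_subtori
    (n : ℕ) (hn : 2 ≤ n) (Δ : LaurentRing n)
    (hΔ : ¬ ∃ c : ℤ, Δ = AddMonoidAlgebra.single (0 : Fin n → ℤ) c) :
    NewtonSegment Δ ↔
      ∃ h : Fin n → ℤ, h ≠ 0 ∧ IsPrimitiveVec h ∧
        ∃ Z : Finset ℂˣ, Z.Nonempty ∧
          V Δ = ⋃ z ∈ Z, {ρ : Fin n → ℂˣ | torPow ρ h = z} :=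
  newtonSegment_iff_union_parallel_subtori_general n Δ
end

section
/- Let N be a compact orientable 3-manifold with empty or toroidal boundary, b_1(N) ≥ 2, whose Thurston norm ball has at least two non-equivalent fibered faces. Then the thickness of the Alexander polynomial of N is at least 2. -/
/-- The pairing between `H¹(N;ℚ) = ℚ^n` and the exponent lattice `ℤ^n`. -/
def pairQ {n : ℕ} (φ : Fin n → ℚ) (g : Fin n → ℤ) : ℚ := ∑ i, φ i * (g i : ℚ)

/-- The Alexander norm of `φ` w.r.t. the Alexander polynomial `Δ`:
`max {φ(g) - φ(h) : g, h exponents of Δ}` (and `0` if `Δ = 0`). -/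
noncomputable def alexNorm {n : ℕ} (Δ : LaurentRing n) (φ : Fin n → ℚ) : ℚ :=
  WithBot.unbotD 0 ((Δ.coeff.support ×ˢ Δ.coeff.support).image fun p => pairQ φ p.1 - pairQ φ p.2).max

/-- The dimension of the Newton polytope of `Δ`. -/
noncomputable def newtonDim {n : ℕ} (Δ : LaurentRing n) : ℕ :=
  Module.finrank ℚ (Submodule.span ℚ
    {x : Fin n → ℚ | ∃ g ∈ Δ.coeff.support, ∃ h ∈ Δ.coeff.support,
      x = (fun i => (g i : ℚ)) - (fun i => (h i : ℚ))})

open Filter Topology Matrix Module Submodule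

/-!
On a fibered cone `U` dual to the vertex `v`, McMullen's equality makes the Alexander norm agree
with the linear function `φ ↦ ⟨φ, v⟩`. The Alexander norm is invariant under translation by any
class `ξ` annihilating all exponent differences of `Δ`; moving inside the open set `U` along such
a `ξ` therefore forces `⟨ξ, v⟩ = 0`. By duality `v` lies in the span of the exponent differences,
so two linearly independent dual vertices make that span at least 2-dimensional.
-/

theorem LinearMap.map_eq_zero_of_eqOn_of_forall_add_smul
    {𝕜 E : Type*} [Field 𝕜] [TopologicalSpace 𝕜] [(𝓝[≠] (0 : 𝕜)).NeBot]
    [AddCommGroup E] [Module 𝕜 E] [TopologicalSpace E] [ContinuousAdd E] [ContinuousSMul 𝕜 E]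
    {f : E → 𝕜} {ℓ : E →ₗ[𝕜] 𝕜} {U : Set E} {ξ : E}
    (hU : IsOpen U) (hUne : U.Nonempty) (hfℓ : Set.EqOn f ℓ U)
    (hf : ∀ (t : 𝕜) (x : E), f (x + t • ξ) = f x) : ℓ ξ = 0 := by
  obtain ⟨x, hx⟩ := hUne
  have hline : ∀ᶠ t in 𝓝[≠] (0 : 𝕜), x + t • ξ ∈ U :=
    nhdsWithin_le_nhds <| (hU.preimage (by fun_prop)).mem_nhds (by simpa using hx)
  obtain ⟨t, htU, ht0⟩ := (hline.and self_mem_nhdsWithin).exists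
  have hshift : ℓ x + t * ℓ ξ = ℓ x := by
    rw [← smul_eq_mul, ← map_smul, ← map_add, ← hfℓ htU, hf, hfℓ hx]
  exact (mul_eq_zero.1 (add_eq_left.1 hshift)).resolve_left ht0

theorem Submodule.mem_span_of_forall_dotProduct_eq_zero {K ι : Type*} [Field K] [Fintype ι]
    {S : Set (ι → K)} {v : ι → K}
    (h : ∀ ξ : ι → K, (∀ x ∈ S, ξ ⬝ᵥ x = 0) → ξ ⬝ᵥ v = 0) : v ∈ span K S := by
  classical
  by_contra hv
  obtain ⟨f, hfv, hfS⟩ := exists_dual_map_eq_bot_of_notMem hv inferInstance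
  have hf : ∀ x, (dotProductEquiv K ι).symm f ⬝ᵥ x = f x := fun x => by
    rw [← dotProductEquiv_apply_apply, LinearEquiv.apply_symm_apply]
  refine hfv ?_
  rw [← hf]
  refine h _ fun x hx => ?_
  rw [hf, ← Submodule.mem_bot K, ← hfS]
  exact mem_map_of_mem (subset_span hx)

section Alexander

variable {n : ℕ}

def exponentDiffs (Δ : LaurentRing n) : Set (Fin n → ℚ) :=
  {x | ∃ g ∈ Δ.coeff.support, ∃ h ∈ Δ.coeff.support,
    x = (fun i => (g i : ℚ)) - (fun i => (h i : ℚ))}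

theorem newtonDim_eq_finrank_span (Δ : LaurentRing n) :
    newtonDim Δ = finrank ℚ (span ℚ (exponentDiffs Δ)) := rfl

theorem pairQ_eq_dotProduct (φ : Fin n → ℚ) (g : Fin n → ℤ) :
    pairQ φ g = φ ⬝ᵥ fun i => (g i : ℚ) := rfl

theorem alexNorm_add_of_forall_dotProduct_eq_zero {Δ : LaurentRing n} {φ ξ : Fin n → ℚ}
    (hξ : ∀ x ∈ exponentDiffs Δ, ξ ⬝ᵥ x = 0) : alexNorm Δ (φ + ξ) = alexNorm Δ φ := by
  unfold alexNorm
  congr 2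
  refine Finset.image_congr fun p hp => ?_
  rw [Finset.mem_coe, Finset.mem_product] at hp
  have hdiff := hξ _ ⟨p.1, hp.1, p.2, hp.2, rfl⟩
  rw [dotProduct_sub] at hdiff
  simp only [pairQ_eq_dotProduct, add_dotProduct]
  linear_combination hdiff

theorem mem_span_exponentDiffs_of_alexNorm_eq_on_open {Δ : LaurentRing n} {v : Fin n → ℚ}
    {U : Set (Fin n → ℚ)} (hU : IsOpen U) (hUne : U.Nonempty)
    (hv : ∀ φ ∈ U, alexNorm Δ φ = φ ⬝ᵥ v) : v ∈ span ℚ (exponentDiffs Δ) := by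
  refine mem_span_of_forall_dotProduct_eq_zero fun ξ hξ => ?_
  rw [dotProduct_comm]
  refine LinearMap.map_eq_zero_of_eqOn_of_forall_add_smul (ℓ := dotProductEquiv ℚ (Fin n) v)
    hU hUne (fun φ hφ => (hv φ hφ).trans (dotProduct_comm _ _)) fun t φ => ?_
  refine alexNorm_add_of_forall_dotProduct_eq_zero fun x hx => ?_
  rw [smul_dotProduct, hξ x hx, smul_zero]

end Alexander

theorem thickness_ge_two_of_two_fibered_faces_general
    (n : ℕ)
    (Δ : LaurentRing n)                     -- the Alexander polynomial of `N`
    (T : (Fin n → ℚ) → ℚ)                   -- the Thurston norm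
    (Fib : Set (Fin n → ℚ))                 -- the set of fibered classes
    -- McMullen: `‖φ‖_A ≤ ‖φ‖_T`, with equality for fibered classes
    (heq : ∀ φ ∈ Fib, alexNorm Δ φ = T φ)
    -- two non-equivalent fibered faces, recorded by their dual vertices
    (v₁ v₂ : Fin n → ℚ) (U₁ U₂ : Set (Fin n → ℚ))
    (hU₁ : IsOpen U₁) (hU₁ne : U₁.Nonempty) (hU₁fib : U₁ ⊆ Fib)
    (hv₁ : ∀ φ ∈ U₁, T φ = ∑ i, φ i * v₁ i)
    (hU₂ : IsOpen U₂) (hU₂ne : U₂.Nonempty) (hU₂fib : U₂ ⊆ Fib)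
    (hv₂ : ∀ φ ∈ U₂, T φ = ∑ i, φ i * v₂ i)
    -- non-equivalence of the two faces: the dual vertices span a plane
    (hindep : LinearIndependent ℚ ![v₁, v₂]) :
    2 ≤ newtonDim Δ := by
  have hmem₁ : v₁ ∈ span ℚ (exponentDiffs Δ) :=
    mem_span_exponentDiffs_of_alexNorm_eq_on_open hU₁ hU₁ne fun φ hφ =>
      (heq φ (hU₁fib hφ)).trans (hv₁ φ hφ)
  have hmem₂ : v₂ ∈ span ℚ (exponentDiffs Δ) :=
    mem_span_exponentDiffs_of_alexNorm_eq_on_open hU₂ hU₂ne fun φ hφ =>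
      (heq φ (hU₂fib hφ)).trans (hv₂ φ hφ)
  have hle : span ℚ (Set.range ![v₁, v₂]) ≤ span ℚ (exponentDiffs Δ) :=
    span_le.2 <| Set.range_subset_iff.2 <| Fin.forall_fin_two.2 ⟨hmem₁, hmem₂⟩
  calc 2 = finrank ℚ (span ℚ (Set.range ![v₁, v₂])) := by
        rw [finrank_span_eq_card hindep, Fintype.card_fin]
    _ ≤ newtonDim Δ := finrank_mono hle

theorem thickness_ge_two_of_two_fibered_faces
    (n : ℕ) (hn : 2 ≤ n)
    (Δ : LaurentRing n)                     -- the Alexander polynomial of `N`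
    (T : (Fin n → ℚ) → ℚ)                   -- the Thurston norm
    (Fib : Set (Fin n → ℚ))                 -- the set of fibered classes
    -- McMullen: `‖φ‖_A ≤ ‖φ‖_T`, with equality for fibered classes
    (hMcM : ∀ φ : Fin n → ℚ, alexNorm Δ φ ≤ T φ)
    (heq : ∀ φ ∈ Fib, alexNorm Δ φ = T φ)
    -- two non-equivalent fibered faces, recorded by their dual vertices
    (v₁ v₂ : Fin n → ℚ) (U₁ U₂ : Set (Fin n → ℚ))
    (hU₁ : IsOpen U₁) (hU₁ne : U₁.Nonempty) (hU₁fib : U₁ ⊆ Fib)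
    (hv₁ : ∀ φ ∈ U₁, T φ = ∑ i, φ i * v₁ i)
    (hU₂ : IsOpen U₂) (hU₂ne : U₂.Nonempty) (hU₂fib : U₂ ⊆ Fib)
    (hv₂ : ∀ φ ∈ U₂, T φ = ∑ i, φ i * v₂ i)
    -- non-equivalence of the two faces: the dual vertices span a plane
    (hindep : LinearIndependent ℚ ![v₁, v₂]) :
    2 ≤ newtonDim Δ :=
  thickness_ge_two_of_two_fibered_faces_general n Δ T Fib heq v₁ v₂ U₁ U₂ hU₁ hU₁ne hU₁fib hv₁ hU₂
    hU₂ne hU₂fib hv₂ hindep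
end
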